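/- arXiv:2309.08199 — 2 statements merged into one kernel-verified Lean document; each statement's English description precedes it below -/
import Mathlib

section
/- (Proposition 2(b), identification of the causal risk ratio via selection probability and outcome mean) Under Assumptions (A1)–(A4) and E[Y0] ≠ 0, one has E[(R/ρ(X))·m(0,X,V)] ≠ 0 and ξ = E[(R/ρ(X))·m(1,X,V)] / E[(R/ρ(X))·m(0,X,V)]. -/
/-!
Conditional independence (A2) of `Z` and `Y_j` given `(X, V)` means that adding `Z` to the
conditioning does not change `E[Y_j | X, V]`. On the event `{Z = j}` the outcome mean
`m(Z, X, V) = E[Y | Z, X, V]` is therefore `E[Y_j | X, V]`, and since this event has positive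
conditional probability (A3), `m(j, X, V) = E[Y_j | X, V]` almost surely. In the same way (A1)
gives `E[R | X, V] = ρ(X)`, so weighting by `R / ρ(X)` integrates every function of `(X, V)` as
if there were no selection: `E[(R / ρ(X)) m(j, X, V)] = E[m(j, X, V)] = E[Y_j]`.
-/

open MeasureTheory ProbabilityTheory

theorem integral_mul_comp_eq_of_setIntegral_preimage_eq {Ω δ : Type*} {mΩ : MeasurableSpace Ω}
    {μ : Measure Ω} [MeasurableSpace δ] {T : Ω → δ} (hT : Measurable T) {a b : Ω → ℝ}
    (ha0 : 0 ≤ᵐ[μ] a) (hb0 : 0 ≤ᵐ[μ] b) (ha : Integrable a μ) (hb : Integrable b μ)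
    (h : ∀ E, MeasurableSet E → ∫ ω in T ⁻¹' E, a ω ∂μ = ∫ ω in T ⁻¹' E, b ω ∂μ)
    {ψ : δ → ℝ} (hψ : Measurable ψ) :
    ∫ ω, a ω * ψ (T ω) ∂μ = ∫ ω, b ω * ψ (T ω) ∂μ := by
  -- `ψ ∘ T` need not be integrable: both sides integrate `ψ` against the same image measure.
  have hmap : ∀ c : Ω → ℝ, 0 ≤ᵐ[μ] c → Integrable c μ →
      ∫ ω, c ω * ψ (T ω) ∂μ
        = ∫ x, ψ x ∂(μ.withDensity fun ω => ENNReal.ofReal (c ω)).map T := by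
    intro c hc0 hc
    rw [integral_map hT.aemeasurable hψ.aestronglyMeasurable,
      integral_withDensity_eq_integral_toReal_smul₀ hc.aemeasurable.ennreal_ofReal
        (ae_of_all _ fun _ => ENNReal.ofReal_lt_top)]
    refine integral_congr_ae ?_
    filter_upwards [hc0] with ω hω
    simp [ENNReal.toReal_ofReal hω]
  rw [hmap a ha0 ha, hmap b hb0 hb]
  congr 1
  ext E hE
  rw [Measure.map_apply hT hE, Measure.map_apply hT hE, withDensity_apply _ (hT hE),
    withDensity_apply _ (hT hE),
    ← ofReal_integral_eq_lintegral_ofReal ha.integrableOn (ae_restrict_of_ae ha0),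
    ← ofReal_integral_eq_lintegral_ofReal hb.integrableOn (ae_restrict_of_ae hb0), h E hE]

theorem integral_div_mul_comp_eq_of_condExp_eq {Ω δ : Type*} {mΩ : MeasurableSpace Ω}
    {μ : Measure Ω} [IsFiniteMeasure μ] [MeasurableSpace δ] {T : Ω → δ} (hT : Measurable T)
    {R : Ω → ℝ} (hR0 : 0 ≤ᵐ[μ] R) (hR : Integrable R μ) {r : δ → ℝ} (hr : Measurable r)
    (hr0 : ∀ᵐ ω ∂μ, 0 < r (T ω))
    (hcond : μ[R | MeasurableSpace.comap T inferInstance] =ᵐ[μ] fun ω => r (T ω))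
    {h : δ → ℝ} (hh : Measurable h) :
    ∫ ω, R ω / r (T ω) * h (T ω) ∂μ = ∫ ω, h (T ω) ∂μ := by
  have hweights : ∀ E, MeasurableSet E →
      ∫ ω in T ⁻¹' E, R ω ∂μ = ∫ ω in T ⁻¹' E, r (T ω) ∂μ := fun E hE =>
    (setIntegral_condExp hT.comap_le hR ⟨E, hE, rfl⟩).symm.trans
      (setIntegral_congr_ae (hT hE) (by filter_upwards [hcond] with ω hω _ using hω))
  calc ∫ ω, R ω / r (T ω) * h (T ω) ∂μ = ∫ ω, R ω * (h / r) (T ω) ∂μ := by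
        simp only [Pi.div_apply, mul_div_assoc', div_mul_eq_mul_div]
    _ = ∫ ω, r (T ω) * (h / r) (T ω) ∂μ :=
        integral_mul_comp_eq_of_setIntegral_preimage_eq hT hR0
          (by filter_upwards [hr0] with ω hω using hω.le) hR
          (integrable_condExp.congr hcond) hweights (hh.div hr)
    _ = ∫ ω, h (T ω) ∂μ := integral_congr_ae <| by
        filter_upwards [hr0] with ω hω using mul_div_cancel₀ _ hω.ne'

theorem condExp_comap_prodMk_ae_eq_of_condIndepFun {Ω β γ : Type*} {mΩ : MeasurableSpace Ω}
    [StandardBorelSpace Ω] {μ : Measure Ω} [IsFiniteMeasure μ]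
    [MeasurableSpace β] [StandardBorelSpace β] [Nonempty β] [MeasurableSpace γ]
    {f : Ω → ℝ} {g : Ω → β} {k : Ω → γ} (hf : Measurable f) (hg : Measurable g)
    (hk : Measurable k) (hfi : Integrable f μ) (h : g ⟂ᵢ[k, hk; μ] f) :
    μ[f | MeasurableSpace.comap (fun ω => (k ω, g ω)) inferInstance]
      =ᵐ[μ] μ[f | MeasurableSpace.comap k inferInstance] := by
  have hkg := ae_of_ae_map (hk.prodMk hg).aemeasurable
    ((condIndepFun_iff_condDistrib_prod_ae_eq_prodMkRight hf hg hk).mp h)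
  filter_upwards [condExp_ae_eq_integral_condDistrib' (hk.prodMk hg) hfi,
    condExp_ae_eq_integral_condDistrib' hk hfi, hkg] with ω hkgω hkω hω
  rw [hkgω, hkω, hω, Kernel.prodMkRight_apply]

theorem ae_eq_zero_of_eq_zero_on_of_condExp_ne_zero {Ω : Type*} {m mΩ : MeasurableSpace Ω}
    {μ : Measure Ω} [IsFiniteMeasure μ] {D : Ω → ℝ} {s : Set Ω}
    (hD : StronglyMeasurable[m] D) (hs : MeasurableSet s) (h : ∀ᵐ ω ∂μ, ω ∈ s → D ω = 0)
    (hs_pos : ∀ᵐ ω ∂μ, (μ⟦s | m⟧) ω ≠ 0) :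
    D =ᵐ[μ] 0 := by
  have hDs : D * s.indicator (fun _ => (1 : ℝ)) =ᵐ[μ] 0 := by
    filter_upwards [h] with ω hω
    by_cases hωs : ω ∈ s <;> simp [hωs, hω]
  have hpull := condExp_mul_of_stronglyMeasurable_left hD
    ((integrable_zero _ _ μ).congr hDs.symm) ((integrable_const (1 : ℝ)).indicator hs)
  filter_upwards [hpull.symm.trans ((condExp_congr_ae hDs).trans condExp_zero.eventuallyEq),
    hs_pos] with ω hω hωs
  exact (mul_eq_zero.mp hω).resolve_right hωs

theorem regression_ae_eq_condExp_of_condIndepFun {Ω β δ : Type*} {mΩ : MeasurableSpace Ω}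
    [StandardBorelSpace Ω] {μ : Measure Ω} [IsFiniteMeasure μ]
    [MeasurableSpace β] [StandardBorelSpace β] [Nonempty β] [MeasurableSpace δ]
    {Z : Ω → β} {T : Ω → δ} {Y Y' : Ω → ℝ} {g : β × δ → ℝ} {j : β}
    (hZ : Measurable Z) (hT : Measurable T) (hY' : Measurable Y') (hg : Measurable g)
    (hY_int : Integrable Y μ) (hY'_int : Integrable Y' μ) (hind : Z ⟂ᵢ[T, hT; μ] Y')
    (hreg : (fun ω => g (Z ω, T ω))
      =ᵐ[μ] μ[Y | MeasurableSpace.comap (fun ω => (Z ω, T ω)) inferInstance])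
    (hYY' : ∀ ω, Z ω = j → Y ω = Y' ω)
    (hpos : ∀ᵐ ω ∂μ, (μ⟦Z ⁻¹' {j} | MeasurableSpace.comap T inferInstance⟧) ω ≠ 0) :
    (fun ω => g (j, T ω)) =ᵐ[μ] μ[Y' | MeasurableSpace.comap T inferInstance] := by
  set m := MeasurableSpace.comap T inferInstance
  set m₂ := MeasurableSpace.comap (fun ω => (Z ω, T ω)) inferInstance
  have hs : MeasurableSet[m₂] (Z ⁻¹' {j}) :=
    (comap_measurable (fun ω => (Z ω, T ω))).fst (measurableSet_singleton j)
  have hY'_cond : μ[Y' | m₂] =ᵐ[μ] μ[Y' | m] := by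
    have hswap : MeasurableSpace.comap (fun ω => (T ω, Z ω)) inferInstance = m₂ :=
      (MeasurableSpace.comap_prodMk T Z).trans
        ((sup_comm _ _).trans (MeasurableSpace.comap_prodMk Z T).symm)
    simpa only [hswap] using condExp_comap_prodMk_ae_eq_of_condIndepFun hY' hZ hT hY'_int hind
  have hY_eq_on : (Z ⁻¹' {j}).indicator (μ[Y | m₂])
      =ᵐ[μ] (Z ⁻¹' {j}).indicator (μ[Y' | m₂]) := by
    refine (condExp_indicator hY_int hs).symm.trans ((condExp_congr_ae ?_).trans
      (condExp_indicator hY'_int hs))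
    exact .of_forall (congrFun (Set.indicator_congr (s := Z ⁻¹' {j}) hYY'))
  have hdiff := ae_eq_zero_of_eq_zero_on_of_condExp_ne_zero
    (D := fun ω => g (j, T ω) - μ[Y' | m] ω)
    ((hg.comp (measurable_const.prodMk (comap_measurable T))).stronglyMeasurable.sub
      stronglyMeasurable_condExp) (hZ (measurableSet_singleton j)) ?_ hpos
  · filter_upwards [hdiff] with ω hω using sub_eq_zero.mp hω
  filter_upwards [hreg, hY_eq_on, hY'_cond] with ω hreg_ω hon_ω hY'_ω hω
  rw [Set.indicator_of_mem hω, Set.indicator_of_mem hω] at hon_ω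
  rw [Set.mem_preimage, Set.mem_singleton_iff] at hω
  rw [sub_eq_zero, ← hω, hreg_ω, hon_ω, hY'_ω]

theorem condExp_preimage_one_eq_condExp {Ω : Type*} {m mΩ : MeasurableSpace Ω} {μ : Measure Ω}
    {Z : Ω → ℝ} (hZ01 : ∀ ω, Z ω = 0 ∨ Z ω = 1) :
    μ⟦Z ⁻¹' {1} | m⟧ = μ[Z | m] := by
  congr 1
  funext ω
  rcases hZ01 ω with h | h <;> simp [h]

theorem condExp_preimage_zero_ae_eq_one_sub {Ω : Type*} {m mΩ : MeasurableSpace Ω}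
    {μ : Measure Ω} [IsFiniteMeasure μ] (hm : m ≤ mΩ) {Z : Ω → ℝ} (hZ : Integrable Z μ)
    (hZ01 : ∀ ω, Z ω = 0 ∨ Z ω = 1) :
    μ⟦Z ⁻¹' {0} | m⟧ =ᵐ[μ] 1 - μ[Z | m] := by
  have hind : (Z ⁻¹' {0}).indicator (fun _ => (1 : ℝ)) = 1 - Z := by
    funext ω
    rcases hZ01 ω with h | h <;> simp [h]
  rw [hind]
  refine (condExp_sub (integrable_const (1 : ℝ)) hZ m).trans ?_
  rw [condExp_const hm]
  rfl

theorem crr_identification_outcome_mean_general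
    {Ω 𝒳 𝒱 : Type*}
    [MeasurableSpace Ω] [StandardBorelSpace Ω] [Nonempty Ω]
    [MeasurableSpace 𝒳]
    [MeasurableSpace 𝒱] [StandardBorelSpace 𝒱]
    (μ : Measure Ω) [IsProbabilityMeasure μ]
    (X : Ω → 𝒳) (V : Ω → 𝒱) (Z R Y0 Y1 : Ω → ℝ)
    (hX : Measurable X) (hV : Measurable V) (hZ : Measurable Z)
    (hR : Measurable R) (hY0 : Measurable Y0) (hY1 : Measurable Y1)
    (hZ01 : ∀ ω, Z ω = 0 ∨ Z ω = 1) (hR01 : ∀ ω, R ω = 0 ∨ R ω = 1)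
    (hYbd : ∃ C, ∀ ω, |Y0 ω| ≤ C ∧ |Y1 ω| ≤ C)
    (Y : Ω → ℝ) (hYdef : ∀ ω, Y ω = Z ω * Y1 ω + (1 - Z ω) * Y0 ω)
    (pi : 𝒳 × 𝒱 → ℝ) (rho : 𝒳 → ℝ)
    (hrhoM : Measurable rho)
    (hpi : (fun ω => pi (X ω, V ω)) =ᵐ[μ]
      μ[Z | MeasurableSpace.comap (fun ω => (X ω, V ω)) inferInstance])
    (hrho : (fun ω => rho (X ω)) =ᵐ[μ]
      μ[R | MeasurableSpace.comap X inferInstance])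
    (hA1 : CondIndepFun (MeasurableSpace.comap X inferInstance)
      (measurable_iff_comap_le.mp hX) R (fun ω => (Y ω, Z ω, V ω)) μ)
    (hA2 : CondIndepFun (MeasurableSpace.comap (fun ω => (X ω, V ω)) inferInstance)
      (measurable_iff_comap_le.mp (hX.prodMk hV)) Z (fun ω => (Y0 ω, Y1 ω)) μ)
    (hA3 : ∀ᵐ ω ∂μ, 0 < pi (X ω, V ω) ∧ pi (X ω, V ω) < 1)
    (hA4 : ∀ᵐ ω ∂μ, 0 < rho (X ω))
    (mo : ℝ × 𝒳 × 𝒱 → ℝ) (hmoM : Measurable mo)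
    (hmo : (fun ω => mo (Z ω, X ω, V ω)) =ᵐ[μ]
      μ[Y | MeasurableSpace.comap (fun ω => (Z ω, X ω, V ω)) inferInstance])
    (hY0ne : ∫ ω, Y0 ω ∂μ ≠ 0) :
    (∫ ω, (R ω / rho (X ω)) * mo (0, X ω, V ω) ∂μ ≠ 0) ∧
    (∫ ω, Y1 ω ∂μ) / (∫ ω, Y0 ω ∂μ)
      = (∫ ω, (R ω / rho (X ω)) * mo (1, X ω, V ω) ∂μ)
        / ∫ ω, (R ω / rho (X ω)) * mo (0, X ω, V ω) ∂μ := by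
  obtain ⟨C, hC⟩ := hYbd
  have hXV := hX.prodMk hV
  have hY0_int : Integrable Y0 μ :=
    .of_bound hY0.aestronglyMeasurable C (.of_forall fun ω => (hC ω).1)
  have hY1_int : Integrable Y1 μ :=
    .of_bound hY1.aestronglyMeasurable C (.of_forall fun ω => (hC ω).2)
  have hY_int : Integrable Y μ := .of_bound (by rw [funext hYdef]; fun_prop) C <|
    .of_forall fun ω => by rcases hZ01 ω with h | h <;> simp [hYdef, h, hC ω]
  have hZ_int : Integrable Z μ := .of_bound hZ.aestronglyMeasurable 1 <|
    .of_forall fun ω => by rcases hZ01 ω with h | h <;> simp [h]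
  have hR_int : Integrable R μ := .of_bound hR.aestronglyMeasurable 1 <|
    .of_forall fun ω => by rcases hR01 ω with h | h <;> simp [h]
  have : Nonempty 𝒱 := ⟨V (Classical.arbitrary Ω)⟩
  have hselection : μ[R | MeasurableSpace.comap (fun ω => (X ω, V ω)) inferInstance]
      =ᵐ[μ] fun ω => rho (X ω) :=
    (condExp_comap_prodMk_ae_eq_of_condIndepFun hR hV hX hR_int
      (hA1.comp measurable_id (measurable_snd.comp measurable_snd)).symm).trans hrho.symm
  have hweighting : ∀ (j : ℝ) (Yj : Ω → ℝ), (fun ω => mo (j, X ω, V ω))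
        =ᵐ[μ] μ[Yj | MeasurableSpace.comap (fun ω => (X ω, V ω)) inferInstance] →
      ∫ ω, (R ω / rho (X ω)) * mo (j, X ω, V ω) ∂μ = ∫ ω, Yj ω ∂μ := fun j Yj hmj =>
    (integral_div_mul_comp_eq_of_condExp_eq (r := fun p => rho p.1) (h := fun p => mo (j, p)) hXV
      (.of_forall fun ω => by rcases hR01 ω with h | h <;> simp [h]) hR_int
      (hrhoM.comp measurable_fst) hA4 hselection (hmoM.comp measurable_prodMk_left)).trans
    ((integral_congr_ae hmj).trans (integral_condExp hXV.comap_le))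
  have hm1 := regression_ae_eq_condExp_of_condIndepFun (j := 1) hZ hXV hY1 hmoM hY_int hY1_int
    (hA2.comp measurable_id measurable_snd) hmo (fun ω h => by simp [hYdef, h]) (by
      filter_upwards [hpi, hA3] with ω hpi_ω hA3_ω
      rw [condExp_preimage_one_eq_condExp hZ01, ← hpi_ω]
      exact hA3_ω.1.ne')
  have hm0 := regression_ae_eq_condExp_of_condIndepFun (j := 0) hZ hXV hY0 hmoM hY_int hY0_int
    (hA2.comp measurable_id measurable_fst) hmo (fun ω h => by simp [hYdef, h]) (by
      filter_upwards [condExp_preimage_zero_ae_eq_one_sub hXV.comap_le hZ_int hZ01, hpi, hA3]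
        with ω h0 hpi_ω hA3_ω
      rw [h0, Pi.sub_apply, ← hpi_ω]
      exact (sub_pos.mpr hA3_ω.2).ne')
  rw [hweighting 1 Y1 hm1, hweighting 0 Y0 hm0]
  exact ⟨hY0ne, rfl⟩

theorem crr_identification_outcome_mean
    {Ω 𝒳 𝒱 : Type*}
    [MeasurableSpace Ω] [StandardBorelSpace Ω] [Nonempty Ω]
    [MeasurableSpace 𝒳] [StandardBorelSpace 𝒳]
    [MeasurableSpace 𝒱] [StandardBorelSpace 𝒱]
    (μ : Measure Ω) [IsProbabilityMeasure μ]
    (X : Ω → 𝒳) (V : Ω → 𝒱) (Z R Y0 Y1 : Ω → ℝ)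
    (hX : Measurable X) (hV : Measurable V) (hZ : Measurable Z)
    (hR : Measurable R) (hY0 : Measurable Y0) (hY1 : Measurable Y1)
    (hZ01 : ∀ ω, Z ω = 0 ∨ Z ω = 1) (hR01 : ∀ ω, R ω = 0 ∨ R ω = 1)
    (hYbd : ∃ C, ∀ ω, |Y0 ω| ≤ C ∧ |Y1 ω| ≤ C)
    (Y : Ω → ℝ) (hYdef : ∀ ω, Y ω = Z ω * Y1 ω + (1 - Z ω) * Y0 ω)
    (pi : 𝒳 × 𝒱 → ℝ) (rho : 𝒳 → ℝ)
    (hpiM : Measurable pi) (hrhoM : Measurable rho)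
    (hpi : (fun ω => pi (X ω, V ω)) =ᵐ[μ]
      μ[Z | MeasurableSpace.comap (fun ω => (X ω, V ω)) inferInstance])
    (hrho : (fun ω => rho (X ω)) =ᵐ[μ]
      μ[R | MeasurableSpace.comap X inferInstance])
    (hA1 : CondIndepFun (MeasurableSpace.comap X inferInstance)
      (measurable_iff_comap_le.mp hX) R (fun ω => (Y ω, Z ω, V ω)) μ)
    (hA2 : CondIndepFun (MeasurableSpace.comap (fun ω => (X ω, V ω)) inferInstance)
      (measurable_iff_comap_le.mp (hX.prodMk hV)) Z (fun ω => (Y0 ω, Y1 ω)) μ)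
    (hA3 : ∀ᵐ ω ∂μ, 0 < pi (X ω, V ω) ∧ pi (X ω, V ω) < 1)
    (hA4 : ∀ᵐ ω ∂μ, 0 < rho (X ω))
    (mo : ℝ × 𝒳 × 𝒱 → ℝ) (hmoM : Measurable mo) (hmoBd : ∃ C, ∀ p, |mo p| ≤ C)
    (hmo : (fun ω => mo (Z ω, X ω, V ω)) =ᵐ[μ]
      μ[Y | MeasurableSpace.comap (fun ω => (Z ω, X ω, V ω)) inferInstance])
    (hY0ne : ∫ ω, Y0 ω ∂μ ≠ 0) :
    (∫ ω, (R ω / rho (X ω)) * mo (0, X ω, V ω) ∂μ ≠ 0) ∧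
    (∫ ω, Y1 ω ∂μ) / (∫ ω, Y0 ω ∂μ)
      = (∫ ω, (R ω / rho (X ω)) * mo (1, X ω, V ω) ∂μ)
        / ∫ ω, (R ω / rho (X ω)) * mo (0, X ω, V ω) ∂μ :=
  crr_identification_outcome_mean_general μ X V Z R Y0 Y1 hX hV hZ hR hY0 hY1 hZ01 hR01 hYbd Y hYdef
    pi rho hrhoM hpi hrho hA1 hA2 hA3 hA4 mo hmoM hmo hY0ne
end

section
/- (Proposition 2(c), identification of the causal risk ratio via imputation model and outcome mean) Under Assumptions (A1)–(A4) and E[Y0] ≠ 0, one has E[δ(0,X)] ≠ 0 and ξ = E[δ(1,X)] / E[δ(0,X)]. -/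
/-!
On the event `{Z = 1}` the outcome mean `m(1, X, V)` agrees with `E[Y | Z, X, V]` and `Y` with
`Y1`. Projecting `Z * Y` onto `σ(X, V)` through `σ(Z, X, V)` therefore gives `m(1, X, V) * π`,
while conditional independence (A2) gives `π * E[Y1 | X, V]`; since `π > 0`, the outcome mean
`m(1, X, V)` is a version of `E[Y1 | X, V]`. The same argument with `1 - Z` and `1 - π > 0`
identifies `m(0, X, V)` with `E[Y0 | X, V]`. Taking expectations,
`E[δ(z, X)] = E[m(z, X, V)] = E[Yz]`.
-/

open MeasureTheory ProbabilityTheory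

section

variable {Ω : Type*} {m m' : MeasurableSpace Ω} [mΩ : MeasurableSpace Ω] {μ : Measure Ω}
  [IsFiniteMeasure μ]

theorem ProbabilityTheory.CondIndepFun.condExp_mul_ae_eq [StandardBorelSpace Ω]
    {hm : m ≤ mΩ} {f g : Ω → ℝ}
    (h : CondIndepFun m hm f g μ) (hf : Measurable f) (hg : Measurable g)
    (hfi : Integrable f μ) (hgi : Integrable g μ) (hfg : Integrable (f * g) μ) :
    μ[f * g | m] =ᵐ[μ] μ[f | m] * μ[g | m] := by
  have hindep : ∀ᵐ ω ∂μ, IndepFun f g (condExpKernel μ m ω) := by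
    filter_upwards [ae_of_ae_trim hm
      ((condIndepFun_iff_map_prod_eq_prod_map_map hf hg).mp h)] with ω hω
    rw [indepFun_iff_map_prod_eq_prod_map_map hf.aemeasurable hg.aemeasurable]
    simpa only [Kernel.map_apply _ (hf.prodMk hg), Kernel.prod_apply,
      Kernel.map_apply _ hf, Kernel.map_apply _ hg] using hω
  filter_upwards [condExp_ae_eq_integral_condExpKernel hm hfg,
    condExp_ae_eq_integral_condExpKernel hm hfi, condExp_ae_eq_integral_condExpKernel hm hgi,
    hindep] with ω hfgω hfω hgω hω
  rw [Pi.mul_apply, hfgω, hfω, hgω]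
  exact hω.integral_mul_eq_mul_integral hf.aestronglyMeasurable hg.aestronglyMeasurable

theorem integral_eq_of_ae_eq_condExp (hm : m ≤ mΩ) {f g : Ω → ℝ} (hfg : f =ᵐ[μ] μ[g | m]) :
    ∫ ω, f ω ∂μ = ∫ ω, g ω ∂μ :=
  (integral_congr_ae hfg).trans (integral_condExp hm)

theorem ae_eq_condExp_of_condIndepFun_of_treated [StandardBorelSpace Ω]
    (hmm' : m ≤ m') (hm' : m' ≤ mΩ) {T Y U h : Ω → ℝ}
    (hT01 : ∀ ω, T ω = 0 ∨ T ω = 1) (hT : Measurable[m'] T) (hU : Measurable U)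
    (hYi : Integrable Y μ) (hUi : Integrable U μ) (hh : StronglyMeasurable[m] h)
    (hYU : ∀ ω, T ω = 1 → Y ω = U ω) (hYh : ∀ᵐ ω ∂μ, T ω = 1 → μ[Y | m'] ω = h ω)
    {hm : m ≤ mΩ} (hind : CondIndepFun m hm T U μ) (hpos : ∀ᵐ ω ∂μ, μ[T | m] ω ≠ 0) :
    h =ᵐ[μ] μ[U | m] := by
  have hTbd : ∀ᵐ ω ∂μ, ‖T ω‖ ≤ 1 :=
    ae_of_all _ fun ω => by rcases hT01 ω with hω | hω <;> simp [hω]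
  have hTΩ : Measurable T := hT.mono hm' le_rfl
  have hTi : Integrable T μ := .of_bound hTΩ.aestronglyMeasurable 1 hTbd
  have hTY : T * Y = T * U := funext fun ω => by
    rcases hT01 ω with hω | hω <;> simp [hω, hYU ω]
  have hTh : T * μ[Y | m'] =ᵐ[μ] T * h := by
    filter_upwards [hYh] with ω hω
    rcases hT01 ω with hTω | hTω <;> simp [hTω, hω]
  have hThi : Integrable (T * h) μ :=
    (integrable_condExp.bdd_mul hTΩ.aestronglyMeasurable hTbd).congr hTh
  have hfactor : μ[T | m] * μ[U | m] =ᵐ[μ] μ[T | m] * h :=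
    calc μ[T | m] * μ[U | m]
        =ᵐ[μ] μ[T * U | m] :=
          (hind.condExp_mul_ae_eq hTΩ hU hTi hUi
            (hUi.bdd_mul hTΩ.aestronglyMeasurable hTbd)).symm
      _ =ᵐ[μ] μ[μ[T * Y | m'] | m] := by rw [hTY]; exact (condExp_condExp_of_le hmm' hm').symm
      _ =ᵐ[μ] μ[T * h | m] := condExp_congr_ae
          ((condExp_stronglyMeasurable_mul_of_bound hm' hT.stronglyMeasurable hYi 1 hTbd).trans hTh)
      _ =ᵐ[μ] μ[T | m] * h := condExp_mul_of_aestronglyMeasurable_right hh.aestronglyMeasurable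
          hThi hTi
  filter_upwards [hfactor, hpos] with ω hω hTω
  exact (mul_left_cancel₀ hTω hω).symm

theorem ae_eq_condExp_potentialOutcomes_of_condIndepFun [StandardBorelSpace Ω]
    (hmm' : m ≤ m') (hm' : m' ≤ mΩ) {Z Y0 Y1 Y : Ω → ℝ} {g : ℝ → Ω → ℝ}
    (hZ01 : ∀ ω, Z ω = 0 ∨ Z ω = 1) (hZ : Measurable[m'] Z)
    (hY0 : Measurable Y0) (hY1 : Measurable Y1) (hY0i : Integrable Y0 μ) (hY1i : Integrable Y1 μ)
    (hYdef : ∀ ω, Y ω = Z ω * Y1 ω + (1 - Z ω) * Y0 ω)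
    (hg : ∀ z, StronglyMeasurable[m] (g z)) (hgY : (fun ω => g (Z ω) ω) =ᵐ[μ] μ[Y | m'])
    {hm : m ≤ mΩ} (hind : CondIndepFun m hm Z (fun ω => (Y0 ω, Y1 ω)) μ)
    (hπ : ∀ᵐ ω ∂μ, 0 < μ[Z | m] ω ∧ μ[Z | m] ω < 1) :
    g 1 =ᵐ[μ] μ[Y1 | m] ∧ g 0 =ᵐ[μ] μ[Y0 | m] := by
  have hZΩ : Measurable Z := hZ.mono hm' le_rfl
  have hZbd : ∀ᵐ ω ∂μ, ‖Z ω‖ ≤ 1 :=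
    ae_of_all _ fun ω => by rcases hZ01 ω with hZω | hZω <;> simp [hZω]
  have h1Zbd : ∀ᵐ ω ∂μ, ‖1 - Z ω‖ ≤ 1 :=
    ae_of_all _ fun ω => by rcases hZ01 ω with hZω | hZω <;> simp [hZω]
  have hYi : Integrable Y μ := by
    rw [funext hYdef]
    exact (hY1i.bdd_mul hZΩ.aestronglyMeasurable hZbd).add
      (hY0i.bdd_mul (by fun_prop) h1Zbd)
  have hπ0 : μ[fun ω => 1 - Z ω | m] =ᵐ[μ] fun ω => 1 - μ[Z | m] ω := by
    filter_upwards [condExp_sub (integrable_const 1) (.of_bound hZΩ.aestronglyMeasurable 1 hZbd) m]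
      with ω hω
    rwa [Pi.sub_apply, condExp_const hm] at hω
  constructor
  · refine ae_eq_condExp_of_condIndepFun_of_treated hmm' hm' hZ01 hZ hY1 hYi hY1i (hg 1)
      (fun ω hZω => by simp [hYdef, hZω]) ?_ (hind.comp measurable_id measurable_snd) ?_
    · filter_upwards [hgY] with ω hω hZω
      rw [← hω, hZω]
    · filter_upwards [hπ] with ω hπω
      exact hπω.1.ne'
  · refine ae_eq_condExp_of_condIndepFun_of_treated (T := fun ω => 1 - Z ω) hmm' hm'
      (fun ω => by rcases hZ01 ω with hZω | hZω <;> simp [hZω]) (measurable_const.sub hZ) hY0 hYi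
      hY0i (hg 0) (fun ω hZω => by simp [hYdef, show Z ω = 0 by linarith]) ?_
      (hind.comp (measurable_const.sub measurable_id) measurable_fst) ?_
    · filter_upwards [hgY] with ω hω hZω
      rw [← hω, show Z ω = 0 by linarith]
    · filter_upwards [hπ0, hπ] with ω hω hπω
      rw [hω]
      exact (sub_pos.2 hπω.2).ne'

end

theorem crr_identification_imputation_general
    {Ω 𝒳 𝒱 : Type*}
    [MeasurableSpace Ω] [StandardBorelSpace Ω]
    [MeasurableSpace 𝒳]
    [MeasurableSpace 𝒱]
    (μ : Measure Ω) [IsProbabilityMeasure μ]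
    (X : Ω → 𝒳) (V : Ω → 𝒱) (Z Y0 Y1 : Ω → ℝ)
    (hX : Measurable X) (hV : Measurable V) (hZ : Measurable Z)
    (hY0 : Measurable Y0) (hY1 : Measurable Y1)
    (hZ01 : ∀ ω, Z ω = 0 ∨ Z ω = 1)
    (hYbd : ∃ C, ∀ ω, |Y0 ω| ≤ C ∧ |Y1 ω| ≤ C)
    (Y : Ω → ℝ) (hYdef : ∀ ω, Y ω = Z ω * Y1 ω + (1 - Z ω) * Y0 ω)
    (pi : 𝒳 × 𝒱 → ℝ)
    (hpi : (fun ω => pi (X ω, V ω)) =ᵐ[μ]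
      μ[Z | MeasurableSpace.comap (fun ω => (X ω, V ω)) inferInstance])
    (hA2 : CondIndepFun (MeasurableSpace.comap (fun ω => (X ω, V ω)) inferInstance)
      (measurable_iff_comap_le.mp (hX.prodMk hV)) Z (fun ω => (Y0 ω, Y1 ω)) μ)
    (hA3 : ∀ᵐ ω ∂μ, 0 < pi (X ω, V ω) ∧ pi (X ω, V ω) < 1)
    (mo : ℝ × 𝒳 × 𝒱 → ℝ) (hmoM : Measurable mo)
    (hmo : (fun ω => mo (Z ω, X ω, V ω)) =ᵐ[μ]
      μ[Y | MeasurableSpace.comap (fun ω => (Z ω, X ω, V ω)) inferInstance])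
    (del : ℝ → 𝒳 → ℝ)
    (hdel : ∀ z ∈ ({0, 1} : Set ℝ),
      (fun ω => del z (X ω)) =ᵐ[μ]
        μ[(fun ω => mo (z, X ω, V ω)) | MeasurableSpace.comap X inferInstance])
    (hY0ne : ∫ ω, Y0 ω ∂μ ≠ 0) :
    (∫ ω, del 0 (X ω) ∂μ ≠ 0) ∧
    (∫ ω, Y1 ω ∂μ) / (∫ ω, Y0 ω ∂μ)
      = (∫ ω, del 1 (X ω) ∂μ) / ∫ ω, del 0 (X ω) ∂μ := by
  obtain ⟨C, hC⟩ := hYbd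
  have hZXV : Measurable[MeasurableSpace.comap (fun ω => (Z ω, X ω, V ω)) inferInstance]
      (fun ω => (Z ω, X ω, V ω)) := comap_measurable _
  have hle : MeasurableSpace.comap (fun ω => (X ω, V ω)) inferInstance
      ≤ MeasurableSpace.comap (fun ω => (Z ω, X ω, V ω)) inferInstance :=
    (measurable_snd.comp hZXV).comap_le
  obtain ⟨h1, h0⟩ := ae_eq_condExp_potentialOutcomes_of_condIndepFun
    (g := fun z ω => mo (z, X ω, V ω)) hle (hZ.prodMk (hX.prodMk hV)).comap_le hZ01
    (measurable_fst.comp hZXV) hY0 hY1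
    (.of_bound hY0.aestronglyMeasurable C (ae_of_all _ fun ω => (hC ω).1))
    (.of_bound hY1.aestronglyMeasurable C (ae_of_all _ fun ω => (hC ω).2)) hYdef
    (fun z => ((hmoM.comp measurable_prodMk_left).comp (comap_measurable _)).stronglyMeasurable)
    hmo hA2 (by filter_upwards [hpi, hA3] with ω hπ hπω; rwa [← hπ])
  have hmXV := (hX.prodMk hV).comap_le
  rw [integral_eq_of_ae_eq_condExp hX.comap_le (hdel 0 (by simp)),
    integral_eq_of_ae_eq_condExp hX.comap_le (hdel 1 (by simp)),
    integral_eq_of_ae_eq_condExp hmXV h0, integral_eq_of_ae_eq_condExp hmXV h1]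
  exact ⟨hY0ne, rfl⟩

theorem crr_identification_imputation
    {Ω 𝒳 𝒱 : Type*}
    [MeasurableSpace Ω] [StandardBorelSpace Ω] [Nonempty Ω]
    [MeasurableSpace 𝒳] [StandardBorelSpace 𝒳]
    [MeasurableSpace 𝒱] [StandardBorelSpace 𝒱]
    (μ : Measure Ω) [IsProbabilityMeasure μ]
    (X : Ω → 𝒳) (V : Ω → 𝒱) (Z R Y0 Y1 : Ω → ℝ)
    (hX : Measurable X) (hV : Measurable V) (hZ : Measurable Z)
    (hR : Measurable R) (hY0 : Measurable Y0) (hY1 : Measurable Y1)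
    (hZ01 : ∀ ω, Z ω = 0 ∨ Z ω = 1) (hR01 : ∀ ω, R ω = 0 ∨ R ω = 1)
    (hYbd : ∃ C, ∀ ω, |Y0 ω| ≤ C ∧ |Y1 ω| ≤ C)
    (Y : Ω → ℝ) (hYdef : ∀ ω, Y ω = Z ω * Y1 ω + (1 - Z ω) * Y0 ω)
    (pi : 𝒳 × 𝒱 → ℝ) (rho : 𝒳 → ℝ)
    (hpiM : Measurable pi) (hrhoM : Measurable rho)
    (hpi : (fun ω => pi (X ω, V ω)) =ᵐ[μ]
      μ[Z | MeasurableSpace.comap (fun ω => (X ω, V ω)) inferInstance])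
    (hrho : (fun ω => rho (X ω)) =ᵐ[μ]
      μ[R | MeasurableSpace.comap X inferInstance])
    (hA1 : CondIndepFun (MeasurableSpace.comap X inferInstance)
      (measurable_iff_comap_le.mp hX) R (fun ω => (Y ω, Z ω, V ω)) μ)
    (hA2 : CondIndepFun (MeasurableSpace.comap (fun ω => (X ω, V ω)) inferInstance)
      (measurable_iff_comap_le.mp (hX.prodMk hV)) Z (fun ω => (Y0 ω, Y1 ω)) μ)
    (hA3 : ∀ᵐ ω ∂μ, 0 < pi (X ω, V ω) ∧ pi (X ω, V ω) < 1)
    (hA4 : ∀ᵐ ω ∂μ, 0 < rho (X ω))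
    (mo : ℝ × 𝒳 × 𝒱 → ℝ) (hmoM : Measurable mo) (hmoBd : ∃ C, ∀ p, |mo p| ≤ C)
    (hmo : (fun ω => mo (Z ω, X ω, V ω)) =ᵐ[μ]
      μ[Y | MeasurableSpace.comap (fun ω => (Z ω, X ω, V ω)) inferInstance])
    (del : ℝ → 𝒳 → ℝ) (hdelM : ∀ z, Measurable (del z))
    (hdel : ∀ z ∈ ({0, 1} : Set ℝ),
      (fun ω => del z (X ω)) =ᵐ[μ]
        μ[(fun ω => mo (z, X ω, V ω)) | MeasurableSpace.comap X inferInstance])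
    (hY0ne : ∫ ω, Y0 ω ∂μ ≠ 0) :
    (∫ ω, del 0 (X ω) ∂μ ≠ 0) ∧
    (∫ ω, Y1 ω ∂μ) / (∫ ω, Y0 ω ∂μ)
      = (∫ ω, del 1 (X ω) ∂μ) / ∫ ω, del 0 (X ω) ∂μ :=
  crr_identification_imputation_general μ X V Z Y0 Y1 hX hV hZ hY0 hY1 hZ01 hYbd Y hYdef pi hpi hA2
    hA3 mo hmoM hmo del hdel hY0ne
end
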